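/- Let f : ℝⁿ → ℝ ∪ {∞} be proper, lower semicontinuous and prox-bounded with threshold λ_f; let Λ ⊆ dom f be a nonempty compact set on which f is constant, with 0 ∈ ∂(e_λ f)(x̄) for all x̄ ∈ Λ, where λ ∈ (0, λ_f). Suppose f satisfies the uniformized Hölder error bound on Λ with exponent γ > 0 and constant μ ≥ 2λ, and that there exists ε̄ > 0 such that for every x with d(x, Λ) < ε̄ and f(x) > f(x̄) (x̄ ∈ Λ), some y ∈ P_λ f(x) satisfies f(y) ≥ f(x̄). Then e_λ f satisfies the uniformized Hölder error bound on Λ with exponent max{2, γ} and constant 2^{max{1, γ-1}} μ. -/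

import Mathlib

open Filter Topology Set
open scoped ENNReal NNReal RealInnerProductSpace

noncomputable section

variable {E : Type*} [NormedAddCommGroup E] [InnerProductSpace ℝ E]

/-- Fréchet (regular) subdifferential of an `EReal`-valued function. -/
def fsubd (f : E → EReal) (x : E) : Set E :=
  {v | f x ≠ ⊤ ∧ f x ≠ ⊥ ∧ ∀ ε : ℝ, 0 < ε → ∀ᶠ y in 𝓝 x,
      (((f x).toReal + inner ℝ v (y - x) - ε * ‖y - x‖ : ℝ) : EReal) ≤ f y}

/-- Limiting (Mordukhovich) subdifferential. -/
def lsubd (f : E → EReal) (x : E) : Set E :=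
  {v | ∃ xs vs : ℕ → E, Tendsto xs atTop (𝓝 x) ∧
      Tendsto (fun k => f (xs k)) atTop (𝓝 (f x)) ∧
      Tendsto vs atTop (𝓝 v) ∧ ∀ k, vs k ∈ fsubd f (xs k)}

/-- Sublevel set `{z | f z ≤ a}`. -/
def slev (f : E → EReal) (a : EReal) : Set E := {z | f z ≤ a}

/-- `d(0, ∂ f x)`, with the convention that the distance to the empty set is `∞`. -/
def subdist (f : E → EReal) (x : E) : ℝ≥0∞ := EMetric.infEdist 0 (lsubd f x)

/-- Conversion of an extended real to `ℝ≥0∞` (truncating negative values). -/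
def toENN (a : EReal) : ℝ≥0∞ := if a = ⊤ then ⊤ else ENNReal.ofReal a.toReal

/-- Moreau envelope `e_λ f`. -/
def moreauEnv (f : E → EReal) (lam : ℝ) (x : E) : EReal :=
  ⨅ y, f y + ((‖y - x‖ ^ 2 / (2 * lam) : ℝ) : EReal)

/-- Proximal mapping `P_λ f` (set of minimizers). -/
def proxPts (f : E → EReal) (lam : ℝ) (x : E) : Set E :=
  {y | ∀ z, f y + ((‖y - x‖ ^ 2 / (2 * lam) : ℝ) : EReal)
        ≤ f z + ((‖z - x‖ ^ 2 / (2 * lam) : ℝ) : EReal)}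

/-- `f` is prox-bounded. -/
def ProxBdd (f : E → EReal) : Prop := ∃ lam > (0 : ℝ), ∃ x, moreauEnv f lam x ≠ ⊥

/-- Threshold `λ_f` of prox-boundedness. -/
def proxThreshold (f : E → EReal) : ℝ :=
  sSup {lam | 0 < lam ∧ ∃ x, moreauEnv f lam x ≠ ⊥}

/-- `f` is proper (never `-∞`, somewhere finite). -/
def IsProperFn (f : E → EReal) : Prop := (∃ x, f x ≠ ⊤) ∧ ∀ x, f x ≠ ⊥

/-- Kurdyka–Łojasiewicz property at `xb` with exponent `γ` and constant `μ`. -/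
def KLAt (f : E → EReal) (xb : E) (γ μ : ℝ) : Prop :=
  ∃ η > (0:ℝ), ∃ ν > (0:ℝ), ∀ x ∈ Metric.ball xb η,
    f xb < f x → f x < f xb + (ν : EReal) →
    toENN (f x - f xb) ^ γ ≤ ENNReal.ofReal μ * subdist f x

/-- Level-set subdifferential error bound at `xb` with exponent `γ` and constant `μ`. -/
def LSEBAt (f : E → EReal) (xb : E) (γ μ : ℝ) : Prop :=
  ∃ η > (0:ℝ), ∃ ν > (0:ℝ), ∀ x ∈ Metric.ball xb η,
    f xb < f x → f x < f xb + (ν : EReal) →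
    EMetric.infEdist x (slev f (f xb)) ^ γ ≤ ENNReal.ofReal μ * subdist f x

/-- Local Hölder error bound at `xb` with exponent `γ` and constant `μ`. -/
def LHEBAt (f : E → EReal) (xb : E) (γ μ : ℝ) : Prop :=
  ∃ η > (0:ℝ), ∀ x ∈ Metric.ball xb η, f xb < f x →
    EMetric.infEdist x (slev f (f xb)) ^ γ ≤ ENNReal.ofReal μ * toENN (f x - f xb)

/-- Uniformized KL property on `Ω`. -/
def uKL (f : E → EReal) (Ω : Set E) (γ μ : ℝ) : Prop :=
  ∃ ε > (0:ℝ), ∃ ν > (0:ℝ), ∀ xb ∈ Ω, ∀ x, Metric.infDist x Ω < ε →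
    f xb < f x → f x < f xb + (ν : EReal) →
    toENN (f x - f xb) ^ γ ≤ ENNReal.ofReal μ * subdist f x

/-- Uniformized level-set subdifferential error bound on `Ω`. -/
def uLSEB (f : E → EReal) (Ω : Set E) (γ μ : ℝ) : Prop :=
  ∃ ε > (0:ℝ), ∃ ν > (0:ℝ), ∀ xb ∈ Ω, ∀ x, Metric.infDist x Ω < ε →
    f xb < f x → f x < f xb + (ν : EReal) →
    EMetric.infEdist x (slev f (f xb)) ^ γ ≤ ENNReal.ofReal μ * subdist f x

/-- Uniformized Hölder error bound on `Ω`. -/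
def uHEB (f : E → EReal) (Ω : Set E) (γ μ : ℝ) : Prop :=
  ∃ ε > (0:ℝ), ∀ xb ∈ Ω, ∀ x, Metric.infDist x Ω < ε → f xb < f x →
    EMetric.infEdist x (slev f (f xb)) ^ γ ≤ ENNReal.ofReal μ * toENN (f x - f xb)

/-- Prox-regularity of `f` at `xb` for `vb` with constant `ρ`. -/
def ProxRegularAt (f : E → EReal) (xb vb : E) (ρ : ℝ) : Prop :=
  vb ∈ lsubd f xb ∧ ∃ ε > (0:ℝ), ∀ x v, v ∈ lsubd f x → v ∈ Metric.ball vb ε →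
    x ∈ Metric.ball xb ε → f x < f xb + (ε : EReal) → ∀ y ∈ Metric.ball xb ε,
      f x + (((inner ℝ v (y - x) : ℝ) - ρ / 2 * ‖y - x‖ ^ 2 : ℝ) : EReal) ≤ f y

/-!
Prox-boundedness makes proximal points exist, and a Fréchet subgradient `v` of `e_λ f` at `x`
equals `(x - z)/λ` for every proximal point `z` of `x`; hence `f(x - λv) ≤ e_λ f(x)`, which lower
semicontinuity passes to limiting subgradients. With `0 ∈ ∂(e_λ f)(x̄)` this gives `e_λ f = f`
on `Λ`. Near `Λ`, the hypothesis provides `y ∈ P_λ f(x)` with `f(y) ≥ f(x̄)`, so that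
`e_λ f(x) - f(x̄) = (f(y) - f(x̄)) + ‖y - x‖²/(2λ)`. Both summands are small, `y` is close to `Λ`,
and `d(x, [e_λ f ≤ f(x̄)]) ≤ ‖x - y‖ + d(y, [f ≤ f(x̄)])`; the error bound of `f` at `y` and
`(a + b)^p ≤ 2^(p-1) (a^p + b^p)` with `p = max 2 γ` give the error bound of `e_λ f`.
-/

theorem toENN_coe (r : ℝ) : toENN (r : EReal) = ENNReal.ofReal r := by
  rw [toENN, if_neg (EReal.coe_ne_top r), EReal.toReal_coe]

theorem exists_le_of_sq_div_sub_sq_div_le {lam lam' : ℝ} (hlam : 0 < lam) (hll : lam < lam')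
    (d A : ℝ) : ∃ R, ∀ t, t ^ 2 / (2 * lam) - (t + d) ^ 2 / (2 * lam') ≤ A → t ≤ R := by
  set a := 1 / (2 * lam) - 1 / (2 * lam')
  have ha : 0 < a := by
    simp only [a, sub_pos]
    gcongr
  have hexpand : (fun t : ℝ => t ^ 2 / (2 * lam) - (t + d) ^ 2 / (2 * lam')) =
      fun t => t * (a * t - d / lam') - d ^ 2 / (2 * lam') := by
    have := (hlam.trans hll).ne'
    ext t
    simp only [a]
    field_simp
    ring
  have htend :
      Tendsto (fun t : ℝ => t ^ 2 / (2 * lam) - (t + d) ^ 2 / (2 * lam')) atTop atTop := by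
    rw [hexpand]
    exact tendsto_atTop_add_const_right _ _ (tendsto_id.atTop_mul_atTop₀
      (tendsto_atTop_add_const_right _ _ (tendsto_id.const_mul_atTop ha)))
  obtain ⟨R, hR⟩ := eventually_atTop.1 (htend.eventually_gt_atTop A)
  exact ⟨R, fun t hA => le_of_not_gt fun ht => (hR t ht.le).not_ge hA⟩

theorem infEDist_rpow_max_le {X : Type*} [PseudoMetricSpace X] {S T : Set X} (hTS : T ⊆ S)
    {x y : X} {γ μ Δ s : ℝ} (hγ : 0 < γ) (hμ : 0 ≤ μ) (hs : 0 ≤ s) (hμΔ : μ * Δ ≤ 1)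
    (hxy : dist x y ^ 2 ≤ μ * (Δ - s))
    (hy : Metric.infEDist y T ^ γ ≤ ENNReal.ofReal (μ * s)) :
    Metric.infEDist x S ^ max 2 γ ≤
      ENNReal.ofReal (2 ^ max 1 (γ - 1) * μ) * ENNReal.ofReal Δ := by
  set p := max 2 γ
  have hp : max 1 (γ - 1) = p - 1 := by rw [← max_sub_sub_right]; norm_num
  have hμs : 0 ≤ μ * s := mul_nonneg hμ hs
  have hμs' : μ * s ≤ μ * Δ := by nlinarith [sq_nonneg (dist x y)]
  have hA : edist x y ^ (2 : ℝ) ≤ ENNReal.ofReal (μ * (Δ - s)) := by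
    rw [edist_dist, ENNReal.ofReal_rpow_of_nonneg dist_nonneg zero_le_two]
    exact ENNReal.ofReal_le_ofReal (by exact_mod_cast hxy)
  have le_one_of_rpow_le {a : ℝ≥0∞} {q r : ℝ} (hq : 0 < q) (h : a ^ q ≤ ENNReal.ofReal r)
      (hr : r ≤ 1) : a ≤ 1 :=
    le_of_not_gt fun ha => (ENNReal.one_lt_rpow ha hq).not_ge
      (h.trans (ENNReal.ofReal_le_one.2 hr))
  have hA1 := le_one_of_rpow_le two_pos hA (by linarith)
  have hB1 := le_one_of_rpow_le hγ hy (hμs'.trans hμΔ)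
  calc Metric.infEDist x S ^ p
      ≤ (edist x y + Metric.infEDist y T) ^ p := by
        gcongr
        exact Metric.infEDist_le_edist_add_infEDist.trans
          (add_le_add le_rfl (Metric.infEDist_anti hTS))
    _ ≤ 2 ^ (p - 1) * (edist x y ^ p + Metric.infEDist y T ^ p) :=
        ENNReal.rpow_add_le_mul_rpow_add_rpow _ _ (by simp [p])
    _ ≤ 2 ^ (p - 1) * (edist x y ^ (2 : ℝ) + Metric.infEDist y T ^ γ) :=
        mul_le_mul_right (add_le_add (ENNReal.rpow_le_rpow_of_exponent_ge hA1 (le_max_left _ _))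
          (ENNReal.rpow_le_rpow_of_exponent_ge hB1 (le_max_right _ _))) _
    _ ≤ 2 ^ (p - 1) * (ENNReal.ofReal (μ * (Δ - s)) + ENNReal.ofReal (μ * s)) := by gcongr
    _ = ENNReal.ofReal (2 ^ max 1 (γ - 1) * μ) * ENNReal.ofReal Δ := by
        rw [← ENNReal.ofReal_add (by nlinarith [sq_nonneg (dist x y)]) hμs, hp,
          ← ENNReal.ofReal_ofNat 2, ENNReal.ofReal_rpow_of_pos two_pos,
          ← ENNReal.ofReal_mul (by positivity), ← ENNReal.ofReal_mul (by positivity)]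
        ring_nf

section MoreauEnvelope

variable {X : Type*} [NormedAddCommGroup X] {f : X → EReal} {lam : ℝ}

theorem moreauEnv_le (f : X → EReal) (lam : ℝ) (x z : X) :
    moreauEnv f lam x ≤ f z + ((‖z - x‖ ^ 2 / (2 * lam) : ℝ) : EReal) :=
  iInf_le _ z

theorem moreauEnv_le_self (f : X → EReal) (lam : ℝ) (x : X) : moreauEnv f lam x ≤ f x := by
  simpa using moreauEnv_le f lam x x

theorem moreauEnv_le_of_dist_le (f : X → EReal) (hlam : 0 ≤ lam) {x z : X} {r : ℝ}
    (hxz : dist x z ≤ r) : moreauEnv f lam x ≤ f z + ((r ^ 2 / (2 * lam) : ℝ) : EReal) := by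
  refine (moreauEnv_le f lam x z).trans (add_le_add le_rfl (EReal.coe_le_coe_iff.2 ?_))
  rw [← dist_eq_norm, dist_comm]
  gcongr

theorem moreauEnv_eq_of_mem_proxPts {x y : X} (hy : y ∈ proxPts f lam x) :
    moreauEnv f lam x = f y + ((‖y - x‖ ^ 2 / (2 * lam) : ℝ) : EReal) :=
  le_antisymm (moreauEnv_le f lam x y) (le_iInf hy)

theorem exists_quadratic_minorant (hlam : lam ∈ Ioo 0 (proxThreshold f)) :
    ∃ lam' > lam, ∃ x₀ : X, ∃ M : ℝ,
      ∀ y, ((M - ‖y - x₀‖ ^ 2 / (2 * lam') : ℝ) : EReal) ≤ f y := by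
  set S := {l : ℝ | 0 < l ∧ ∃ x, moreauEnv f l x ≠ ⊥}
  have hlt : lam < sSup S := hlam.2
  have hSne : S.Nonempty := by
    by_contra hS
    rw [not_nonempty_iff_eq_empty.1 hS, Real.sSup_empty] at hlt
    exact hlt.not_gt hlam.1
  obtain ⟨l, ⟨-, x₀, hx₀⟩, hl⟩ := exists_lt_of_lt_csSup hSne hlt
  obtain ⟨M, hM⟩ : ∃ M : ℝ, (M : EReal) ≤ moreauEnv f l x₀ := by
    by_cases htop : moreauEnv f l x₀ = ⊤
    · exact ⟨0, htop ▸ le_top⟩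
    · exact ⟨_, (EReal.coe_toReal htop hx₀).le⟩
  refine ⟨l, hl, x₀, M, fun y => ?_⟩
  rw [EReal.coe_sub]
  exact EReal.sub_le_of_le_add (hM.trans (moreauEnv_le f l x₀ y))

theorem proxPts_nonempty [ProperSpace X] (hlsc : LowerSemicontinuous f) (hnb : ∀ y, f y ≠ ⊥)
    (hlam : lam ∈ Ioo 0 (proxThreshold f)) (x : X) : (proxPts f lam x).Nonempty := by
  by_cases hf : ∀ y, f y = ⊤
  · exact ⟨x, fun z => by simp [hf]⟩
  obtain ⟨z₀, hz₀⟩ := not_forall.1 hf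
  set g : X → EReal := fun y => f y + ((‖y - x‖ ^ 2 / (2 * lam) : ℝ) : EReal)
  have hg : LowerSemicontinuous g :=
    hlsc.add' (EReal.continuous_coe_iff.2 (by fun_prop)).lowerSemicontinuous
      fun y => EReal.continuousAt_add (.inr (EReal.coe_ne_bot _)) (.inr (EReal.coe_ne_top _))
  set G : ℝ := (f z₀).toReal + ‖z₀ - x‖ ^ 2 / (2 * lam)
  have hG : g z₀ = G := by
    rw [EReal.coe_add, EReal.coe_toReal hz₀ (hnb z₀)]
  set L := {y | g y ≤ G}
  obtain ⟨lam', hll, x₀, M, hM⟩ := exists_quadratic_minorant hlam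
  obtain ⟨R, hR⟩ := exists_le_of_sq_div_sub_sq_div_le hlam.1 hll ‖x - x₀‖ (G - M)
  have hLR : L ⊆ Metric.closedBall x R := fun y hy => by
    rw [Metric.mem_closedBall, dist_eq_norm]
    refine hR _ ?_
    have hgy : M - ‖y - x₀‖ ^ 2 / (2 * lam') + ‖y - x‖ ^ 2 / (2 * lam) ≤ G := by
      rw [← EReal.coe_le_coe_iff, EReal.coe_add]
      exact (add_le_add (hM y) le_rfl).trans hy
    have hx₀ :
        ‖y - x₀‖ ^ 2 / (2 * lam') ≤ (‖y - x‖ + ‖x - x₀‖) ^ 2 / (2 * lam') := by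
      have : 0 < lam' := hlam.1.trans hll
      gcongr
      exact norm_sub_le_norm_sub_add_norm_sub y x x₀
    linarith
  have hL : IsCompact L :=
    (isCompact_closedBall x R).of_isClosed_subset (hg.isClosed_preimage G) hLR
  obtain ⟨a, haL, hmin⟩ := (hg.lowerSemicontinuousOn L).exists_isMinOn ⟨z₀, hG.le⟩ hL
  refine ⟨a, fun z => ?_⟩
  by_cases hz : z ∈ L
  · exact hmin hz
  · exact haL.trans (not_le.1 hz).le

theorem exists_real_gaps_of_mem_proxPts {c r : ℝ} {x y : X} (hy : y ∈ proxPts f lam x)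
    (hfy : (c : EReal) ≤ f y) (hub : moreauEnv f lam x ≤ ((c + r : ℝ) : EReal)) :
    ∃ s Δ : ℝ, 0 ≤ s ∧ f y = ((c + s : ℝ) : EReal) ∧
      moreauEnv f lam x = ((c + Δ : ℝ) : EReal) ∧ ‖y - x‖ ^ 2 / (2 * lam) = Δ - s ∧ Δ ≤ r := by
  have hex := moreauEnv_eq_of_mem_proxPts hy
  have hfy_top : f y ≠ ⊤ := fun h =>
    (EReal.coe_lt_top (c + r)).not_ge (by rwa [hex, h, EReal.top_add_coe] at hub)
  lift f y to ℝ using ⟨hfy_top, ne_bot_of_le_ne_bot (EReal.coe_ne_bot c) hfy⟩ with fy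
  rw [← EReal.coe_add] at hex
  rw [hex, EReal.coe_le_coe_iff] at hub
  refine ⟨fy - c, fy + ‖y - x‖ ^ 2 / (2 * lam) - c, by simpa using hfy, by simp, by simp [hex],
    by ring, by linarith⟩

theorem infEDist_slev_moreauEnv_rpow_le {γ μ c ε : ℝ} {x y : X} (hlam : 0 < lam) (hγ : 0 < γ)
    (hμ : 2 * lam ≤ μ) (hε : 0 ≤ ε) (hεμ : μ * ε ^ 2 ≤ 2 * lam)
    (hub : moreauEnv f lam x ≤ ((c + ε ^ 2 / (2 * lam) : ℝ) : EReal))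
    (hy : y ∈ proxPts f lam x) (hfy : (c : EReal) ≤ f y)
    (hHEB : ∀ z ∈ Metric.closedBall x ε, (c : EReal) < f z →
      Metric.infEDist z (slev f c) ^ γ ≤ ENNReal.ofReal μ * toENN (f z - c)) :
    Metric.infEDist x (slev (moreauEnv f lam) c) ^ max 2 γ ≤
      ENNReal.ofReal (2 ^ max 1 (γ - 1) * μ) * toENN (moreauEnv f lam x - c) := by
  obtain ⟨s, Δ, hs, hfys, hex, hyx, hΔ⟩ := exists_real_gaps_of_mem_proxPts hy hfy hub
  have hμ0 : 0 < μ := by linarith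
  rw [le_div_iff₀ (by positivity)] at hΔ
  have hyx2 : dist x y ^ 2 = 2 * lam * (Δ - s) := by
    rw [dist_comm, dist_eq_norm, ← hyx]
    field_simp
  have hxy : dist y x ≤ ε := by
    refine (pow_le_pow_iff_left₀ dist_nonneg hε two_ne_zero).1 ?_
    rw [dist_comm, hyx2]
    nlinarith
  have hHy : Metric.infEDist y (slev f c) ^ γ ≤ ENNReal.ofReal (μ * s) := by
    rcases hfy.eq_or_lt with heq | hlt
    · rw [Metric.infEDist_zero_of_mem (show y ∈ slev f c from heq.ge),
        ENNReal.zero_rpow_of_pos hγ]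
      exact zero_le
    have := hHEB y (Metric.mem_closedBall.2 hxy) hlt
    rwa [hfys, ← EReal.coe_sub, add_sub_cancel_left, toENN_coe,
      ← ENNReal.ofReal_mul hμ0.le] at this
  rw [hex, ← EReal.coe_sub, add_sub_cancel_left, toENN_coe]
  refine infEDist_rpow_max_le (fun z hz => (moreauEnv_le_self f lam z).trans hz) hγ hμ0.le hs
    (by nlinarith) ?_ hHy
  rw [hyx2]
  nlinarith

end MoreauEnvelope

section Subgradient

variable {f : E → EReal} {lam : ℝ}

theorem eq_sub_smul_of_mem_proxPts_of_mem_fsubd (hlam : 0 < lam) {x v z : E}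
    (hz : z ∈ proxPts f lam x) (hv : v ∈ fsubd (moreauEnv f lam) x) : z = x - lam • v := by
  obtain ⟨htop, hbot, hfr⟩ := hv
  have hex := moreauEnv_eq_of_mem_proxPts hz
  lift f z to ℝ using ⟨fun h => htop (by simp [hex, h]), fun h => hbot (by simp [hex, h])⟩
    with fz hfz
  -- `e_λ f ≤ f z + ‖z - ·‖²/(2λ)`, with equality at `x`, so `v` must be the gradient `(x - z)/λ`
  -- of this quadratic: along `x + t • u` the Fréchet inequality forces `λ ≤ t` for small `t > 0`.
  set u := v - lam⁻¹ • (x - z)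
  suffices hu : u = 0 by
    rw [sub_eq_zero] at hu
    rw [hu, smul_smul, mul_inv_cancel₀ hlam.ne', one_smul, sub_sub_cancel]
  by_contra hu
  have hu0 : 0 < ‖u‖ := norm_pos_iff.2 hu
  have hline : Tendsto (fun t : ℝ => x + t • u) (𝓝[>] 0) (𝓝 x) :=
    ((by fun_prop : Continuous fun t : ℝ => x + t • u).tendsto' 0 x (by simp)).mono_left
      nhdsWithin_le_nhds
  obtain ⟨t, hfrt, ht⟩ := ((hline.eventually (hfr (‖u‖ / 2) (by positivity))).and
    (Ioo_mem_nhdsGT hlam)).exists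
  have hup := moreauEnv_le f lam (x + t • u) z
  rw [← hfz, ← EReal.coe_add] at hup
  have hreal := EReal.coe_le_coe_iff.1 (hfrt.trans hup)
  rw [hex, ← EReal.coe_add, EReal.toReal_coe] at hreal
  have hsq :
      ‖z - (x + t • u)‖ ^ 2 = ‖z - x‖ ^ 2 - 2 * t * inner ℝ (z - x) u + t ^ 2 * ‖u‖ ^ 2 := by
    rw [show z - (x + t • u) = (z - x) - t • u by abel, norm_sub_sq_real, real_inner_smul_right,
      norm_smul, Real.norm_eq_abs, abs_of_pos ht.1]
    ring
  have hvu : inner ℝ v u = ‖u‖ ^ 2 - lam⁻¹ * inner ℝ (z - x) u := by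
    rw [← real_inner_self_eq_norm_sq, show v = u + lam⁻¹ • (x - z) by simp [u],
      inner_add_left, real_inner_smul_left, ← neg_sub z x, inner_neg_left]
    ring
  simp only [add_sub_cancel_left, real_inner_smul_right, norm_smul, Real.norm_eq_abs,
    abs_of_pos ht.1, hsq, hvu] at hreal
  have hkey : lam * (t * ‖u‖ ^ 2) ≤ t * (t * ‖u‖ ^ 2) := by
    field_simp at hreal
    linarith
  exact ht.2.not_ge (le_of_mul_le_mul_right hkey (mul_pos ht.1 (pow_pos hu0 2)))

theorem le_moreauEnv_of_mem_fsubd [ProperSpace E] (hlsc : LowerSemicontinuous f)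
    (hnb : ∀ y, f y ≠ ⊥) (hlam : lam ∈ Ioo 0 (proxThreshold f)) {x v : E}
    (hv : v ∈ fsubd (moreauEnv f lam) x) : f (x - lam • v) ≤ moreauEnv f lam x := by
  obtain ⟨z, hz⟩ := proxPts_nonempty hlsc hnb hlam x
  rw [moreauEnv_eq_of_mem_proxPts hz, ← eq_sub_smul_of_mem_proxPts_of_mem_fsubd hlam.1 hz hv]
  exact le_add_of_nonneg_right
    (EReal.coe_nonneg.2 (div_nonneg (sq_nonneg _) (by linarith [hlam.1])))

theorem le_moreauEnv_of_mem_lsubd [ProperSpace E] (hlsc : LowerSemicontinuous f)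
    (hnb : ∀ y, f y ≠ ⊥) (hlam : lam ∈ Ioo 0 (proxThreshold f)) {x v : E}
    (hv : v ∈ lsubd (moreauEnv f lam) x) : f (x - lam • v) ≤ moreauEnv f lam x := by
  obtain ⟨xs, vs, hxs, hes, hvs, hfs⟩ := hv
  have hzs : Tendsto (fun k => xs k - lam • vs k) atTop (𝓝 (x - lam • v)) :=
    hxs.sub (hvs.const_smul lam)
  refine le_of_forall_lt_imp_le_of_dense fun b hb => ge_of_tendsto hes ?_
  filter_upwards [hzs.eventually (hlsc _ b hb)] with k hk
  exact hk.le.trans (le_moreauEnv_of_mem_fsubd hlsc hnb hlam (hfs k))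

theorem moreauEnv_eq_self_of_zero_mem_lsubd [ProperSpace E] (hlsc : LowerSemicontinuous f)
    (hnb : ∀ y, f y ≠ ⊥) (hlam : lam ∈ Ioo 0 (proxThreshold f)) {x : E}
    (h0 : 0 ∈ lsubd (moreauEnv f lam) x) : moreauEnv f lam x = f x :=
  (moreauEnv_le_self f lam x).antisymm
    (by simpa using le_moreauEnv_of_mem_lsubd hlsc hnb hlam h0)

end Subgradient

theorem stmt15_general {n : ℕ} (f : EuclideanSpace ℝ (Fin n) → EReal)
    (hproper : IsProperFn f) (hlsc : LowerSemicontinuous f)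
    (Λ : Set (EuclideanSpace ℝ (Fin n)))
    (hconst : ∀ x ∈ Λ, ∀ y ∈ Λ, f x = f y)
    (lam : ℝ) (hlam : lam ∈ Set.Ioo 0 (proxThreshold f))
    (hcrit : ∀ xb ∈ Λ, (0 : EuclideanSpace ℝ (Fin n)) ∈ lsubd (moreauEnv f lam) xb)
    (γ μ : ℝ) (hγ : 0 < γ) (hμ : 2 * lam ≤ μ) (h : uHEB f Λ γ μ)
    (hiv : ∃ εb > (0:ℝ), ∀ xb ∈ Λ, ∀ x, Metric.infDist x Λ < εb → f xb < f x →
      ∃ y ∈ proxPts f lam x, f xb ≤ f y) :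
    uHEB (moreauEnv f lam) Λ (max 2 γ) ((2:ℝ) ^ (max 1 (γ - 1)) * μ) := by
  obtain ⟨-, hnb⟩ := hproper
  have henv : ∀ xb ∈ Λ, moreauEnv f lam xb = f xb := fun xb hxb =>
    moreauEnv_eq_self_of_zero_mem_lsubd hlsc hnb hlam (hcrit xb hxb)
  obtain ⟨εf, hεf, hH⟩ := h
  obtain ⟨εb, hεb, hiv⟩ := hiv
  have hlam0 : 0 < lam := hlam.1
  have hμ0 : 0 < μ := by linarith
  -- `2 ε ≤ εf` keeps the proximal point in the error-bound neighbourhood of `Λ`, and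
  -- `μ ε² ≤ 2λ` keeps the distances involved below `1`, where higher powers are smaller.
  set ε := min (min (εf / 2) εb) √(2 * lam / μ)
  have hεf2 : ε ≤ εf / 2 := (min_le_left _ _).trans (min_le_left _ _)
  have hεb2 : ε ≤ εb := (min_le_left _ _).trans (min_le_right _ _)
  have hεμ : μ * ε ^ 2 ≤ 2 * lam := by
    have : ε ^ 2 ≤ 2 * lam / μ := (pow_le_pow_left₀ (by positivity) (min_le_right _ _) 2).trans
      (Real.sq_sqrt (by positivity)).le
    rwa [le_div_iff₀ hμ0, mul_comm] at this
  have hε : 0 < ε := by positivity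
  refine ⟨ε, hε, fun xb hxb x hx hlt => ?_⟩
  rw [henv xb hxb] at hlt ⊢
  obtain ⟨xb', hxb', hxx'⟩ := (Metric.infDist_lt_iff ⟨xb, hxb⟩).1 hx
  obtain ⟨y, hy, hfy⟩ :=
    hiv xb hxb x (hx.trans_le hεb2) (hlt.trans_le (moreauEnv_le_self f lam x))
  have hub := moreauEnv_le_of_dist_le f hlam0.le hxx'.le
  rw [← hconst xb hxb xb' hxb'] at hub
  lift f xb to ℝ using ⟨hlt.ne_top, hnb xb⟩ with c hc
  refine infEDist_slev_moreauEnv_rpow_le hlam0 hγ hμ hε.le hεμ (by rwa [← EReal.coe_add] at hub)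
    hy hfy fun z hz hfz => ?_
  have hzΛ : Metric.infDist z Λ < εf := by
    linarith [Metric.infDist_le_infDist_add_dist (x := z) (y := x) (s := Λ),
      Metric.mem_closedBall.1 hz]
  have := hH xb hxb z hzΛ (hc ▸ hfz)
  rwa [← hc] at this

theorem stmt15 {n : ℕ} (f : EuclideanSpace ℝ (Fin n) → EReal)
    (hproper : IsProperFn f) (hlsc : LowerSemicontinuous f) (hpb : ProxBdd f)
    (Λ : Set (EuclideanSpace ℝ (Fin n))) (hne : Λ.Nonempty) (hcpt : IsCompact Λ)
    (hdom : ∀ x ∈ Λ, f x ≠ ⊤) (hconst : ∀ x ∈ Λ, ∀ y ∈ Λ, f x = f y)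
    (lam : ℝ) (hlam : lam ∈ Set.Ioo 0 (proxThreshold f))
    (hcrit : ∀ xb ∈ Λ, (0 : EuclideanSpace ℝ (Fin n)) ∈ lsubd (moreauEnv f lam) xb)
    (γ μ : ℝ) (hγ : 0 < γ) (hμ : 2 * lam ≤ μ) (h : uHEB f Λ γ μ)
    (hiv : ∃ εb > (0:ℝ), ∀ xb ∈ Λ, ∀ x, Metric.infDist x Λ < εb → f xb < f x →
      ∃ y ∈ proxPts f lam x, f xb ≤ f y) :
    uHEB (moreauEnv f lam) Λ (max 2 γ) ((2:ℝ) ^ (max 1 (γ - 1)) * μ) :=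
  stmt15_general f hproper hlsc Λ hconst lam hlam hcrit γ μ hγ hμ h hiv

end
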